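/- arXiv:2401.16493 — 2 statements merged into one kernel-verified Lean document; each statement's English description precedes it below -/
import Mathlib

section
/- For every n ≥ 1, Σ_{k=1}^n B_{n,k} = ((n+1)/2) * C_n and Σ_{k=1}^{n+1} A_{n,k} = (n+1) * C_n, where C_n is the n-th Catalan number. -/
/-!
Both rows telescope. With `N + 1` the upper index of the binomial in the row and `s + 1 = n + k`,
the entry is `(2s + 1 - N) / (N + 1) * C(N + 1, s + 1) = C(N, s) - C(N, s + 1)`, so the row sum
collapses to `C(N, n)`: this is `C(2n - 1, n) = C(2n, n) / 2` for `B` and `C(2n, n)` for `A`.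
-/

noncomputable def catalanTriangleB (n k : ℕ) : ℚ :=
  (k : ℚ) / n * ((2 * n).choose (n - k))

noncomputable def catalanTriangleA (n k : ℕ) : ℚ :=
  ((2 * k - 1 : ℚ)) / (2 * n + 1) * ((2 * n + 1).choose (n + 1 - k))

noncomputable def catalanQ (n : ℕ) : ℚ := ((2 * n).choose n : ℚ) / (n + 1)

open Finset

namespace Nat

theorem cast_choose_sub_choose_succ {K : Type*} [Field K] [CharZero K] (N s : ℕ) :
    (N.choose s : K) - N.choose (s + 1) = (2 * s + 1 - N) / (N + 1) * (N + 1).choose (s + 1) := by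
  have hPascal : ((N + 1).choose (s + 1) : K) = N.choose s + N.choose (s + 1) := by
    exact_mod_cast choose_succ_succ' N s
  have hAbsorb : ((N + 1 : ℕ) : K) * N.choose s = (N + 1).choose (s + 1) * (s + 1) := by
    exact_mod_cast add_one_mul_choose_eq N s
  push_cast at hAbsorb
  field_simp
  linear_combination 2 * hAbsorb + (N + 1 : K) * hPascal

theorem sum_Icc_cast_choose_sub_choose {R : Type*} [CommRing R] (N n m : ℕ) :
    ∑ k ∈ Icc 1 m, ((N.choose (n + k - 1) : R) - N.choose (n + k)) =
      N.choose n - N.choose (n + m) := by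
  induction m with
  | zero => simp
  | succ m ih =>
    rw [sum_Icc_succ_top (by omega), ih, show n + (m + 1) - 1 = n + m by omega, ← add_assoc]
    ring

theorem two_mul_choose_two_mul_sub_one {n : ℕ} (hn : 1 ≤ n) :
    2 * (2 * n - 1).choose n = (2 * n).choose n := by
  obtain ⟨m, rfl⟩ := Nat.exists_eq_add_of_le' hn
  rw [show 2 * (m + 1) - 1 = 2 * m + 1 by omega, show 2 * (m + 1) = 2 * m + 1 + 1 by omega,
    choose_succ_succ' (2 * m + 1) m, choose_symm_half]
  ring

end Nat

theorem catalanTriangleB_eq_choose_sub_choose {n k : ℕ} (hk : 1 ≤ k) (hkn : k ≤ n) :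
    catalanTriangleB n k = ((2 * n - 1).choose (n + k - 1) : ℚ) - (2 * n - 1).choose (n + k) := by
  obtain ⟨j, rfl⟩ := Nat.exists_eq_add_of_le' hk
  obtain ⟨m, rfl⟩ := Nat.exists_eq_add_of_le' (hk.trans hkn)
  rw [catalanTriangleB, show 2 * (m + 1) - 1 = 2 * m + 1 by omega,
    show m + 1 + (j + 1) - 1 = m + j + 1 by omega, show m + 1 + (j + 1) = m + j + 1 + 1 by omega,
    show 2 * (m + 1) = 2 * m + 1 + 1 by omega, Nat.cast_choose_sub_choose_succ,
    Nat.choose_symm_of_eq_add (show 2 * m + 1 + 1 = (m + 1 - (j + 1)) + (m + j + 1 + 1) by omega)]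
  push_cast
  field_simp
  ring

theorem catalanTriangleA_eq_choose_sub_choose {n k : ℕ} (hk : 1 ≤ k) (hkn : k ≤ n + 1) :
    catalanTriangleA n k = ((2 * n).choose (n + k - 1) : ℚ) - (2 * n).choose (n + k) := by
  obtain ⟨j, rfl⟩ := Nat.exists_eq_add_of_le' hk
  rw [catalanTriangleA, show n + (j + 1) - 1 = n + j by omega,
    show n + (j + 1) = n + j + 1 by omega, Nat.cast_choose_sub_choose_succ,
    Nat.choose_symm_of_eq_add (show 2 * n + 1 = (n + 1 - (j + 1)) + (n + j + 1) by omega)]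
  push_cast
  ring

theorem catalanTriangle_row_sums (n : ℕ) (hn : 1 ≤ n) :
    (∑ k ∈ Finset.Icc 1 n, catalanTriangleB n k) = ((n : ℚ) + 1) / 2 * catalanQ n ∧
      (∑ k ∈ Finset.Icc 1 (n + 1), catalanTriangleA n k) = ((n : ℚ) + 1) * catalanQ n := by
  have hB : ∑ k ∈ Icc 1 n, catalanTriangleB n k = ((2 * n - 1).choose n : ℚ) := by
    rw [sum_congr rfl fun k hk => catalanTriangleB_eq_choose_sub_choose (mem_Icc.1 hk).1
      (mem_Icc.1 hk).2, Nat.sum_Icc_cast_choose_sub_choose,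
      Nat.choose_eq_zero_of_lt (show 2 * n - 1 < n + n by omega)]
    simp
  have hA : ∑ k ∈ Icc 1 (n + 1), catalanTriangleA n k = ((2 * n).choose n : ℚ) := by
    rw [sum_congr rfl fun k hk => catalanTriangleA_eq_choose_sub_choose (mem_Icc.1 hk).1
      (mem_Icc.1 hk).2, Nat.sum_Icc_cast_choose_sub_choose,
      Nat.choose_eq_zero_of_lt (show 2 * n < n + (n + 1) by omega)]
    simp
  have hCentral : (2 * (2 * n - 1).choose n : ℚ) = (2 * n).choose n := by
    exact_mod_cast Nat.two_mul_choose_two_mul_sub_one hn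
  refine ⟨?_, ?_⟩
  · rw [hB, catalanQ, ← hCentral]
    field_simp
  · rw [hA, catalanQ]
    field_simp
end

section
/- For every n ≥ 1, Σ_{k=1}^n (-1)^k B_{n,k} = -C_{n-1} and Σ_{k=1}^{n+1} (-1)^k A_{n,k} = 0, where C_n is the n-th Catalan number. -/
/-!
The two triangles interleave through Pascal-type recurrences,
`A n k = B n (k - 1) + B n k` and `B (n + 1) k = A n k + A n (k + 1)`, each of which is Pascal's
rule plus the ratio `C(m, j + 1) (j + 1) = C(m, j) (m - j)`. Substituting them, every alternating
row sum telescopes down to boundary entries: `B n 0 = 0`, `B n n = 1`, `A n (n + 1) = 1` and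
`A n 1 = C n`.
-/

theorem Finset.sum_Icc_neg_one_pow_mul_add {R : Type*} [CommRing R] (g : ℕ → R) :
    ∀ n, ∑ k ∈ Icc 1 n, (-1) ^ k * (g (k - 1) + g k) = (-1) ^ n * g n - g 0
  | 0 => by simp
  | n + 1 => by
    rw [sum_Icc_succ_top (by omega), sum_Icc_neg_one_pow_mul_add g n, Nat.add_sub_cancel, pow_succ]
    ring

theorem Nat.cast_choose_succ_mul {R : Type*} [Ring R] {m j : ℕ} (h : j ≤ m) :
    (m.choose (j + 1) : R) * (j + 1) = m.choose j * (m - j) := by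
  rw [← Nat.cast_sub h]
  exact_mod_cast congrArg (Nat.cast : ℕ → R) (m.choose_succ_right_eq j)

theorem catalanTriangleA_eq_add {n k : ℕ} (hk : 1 ≤ k) (hkn : k ≤ n) :
    catalanTriangleA n k = catalanTriangleB n (k - 1) + catalanTriangleB n k := by
  obtain ⟨j, rfl⟩ := Nat.exists_eq_add_of_le hkn
  obtain ⟨i, rfl⟩ := Nat.exists_eq_add_of_le' hk
  have ratio := Nat.cast_choose_succ_mul (R := ℚ) (show j ≤ 2 * (i + 1 + j) by omega)
  simp only [catalanTriangleA, catalanTriangleB, Nat.add_sub_cancel, Nat.add_sub_cancel_left,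
    show i + 1 + j + 1 - (i + 1) = j + 1 by omega, show i + 1 + j - i = j + 1 by omega,
    Nat.choose_succ_succ']
  push_cast at ratio ⊢
  field_simp
  linear_combination ratio

theorem catalanTriangleB_succ_eq_add {n k : ℕ} (hk : 1 ≤ k) (hkn : k ≤ n) :
    catalanTriangleB (n + 1) k = catalanTriangleA n k + catalanTriangleA n (k + 1) := by
  obtain ⟨j, rfl⟩ := Nat.exists_eq_add_of_le hkn
  obtain ⟨i, rfl⟩ := Nat.exists_eq_add_of_le' hk
  have ratio := Nat.cast_choose_succ_mul (R := ℚ) (show j ≤ 2 * (i + 1 + j) + 1 by omega)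
  simp only [catalanTriangleA, catalanTriangleB, show i + 1 + j + 1 - (i + 1) = j + 1 by omega,
    show i + 1 + j + 1 - (i + 1 + 1) = j by omega,
    show 2 * (i + 1 + j + 1) = 2 * (i + 1 + j) + 1 + 1 by ring]
  rw [Nat.choose_succ_succ' (2 * (i + 1 + j) + 1) j]
  push_cast at ratio ⊢
  field_simp
  linear_combination ratio

theorem catalanTriangleB_zero (n : ℕ) : catalanTriangleB n 0 = 0 := by
  simp [catalanTriangleB]

theorem catalanTriangleB_self {n : ℕ} (hn : n ≠ 0) : catalanTriangleB n n = 1 := by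
  simp [catalanTriangleB, hn]

theorem catalanTriangleA_succ_self (n : ℕ) : catalanTriangleA n (n + 1) = 1 := by
  simp only [catalanTriangleA, Nat.sub_self, Nat.choose_zero_right]
  push_cast
  field_simp
  ring

theorem catalanTriangleA_one (n : ℕ) : catalanTriangleA n 1 = catalanQ n := by
  have h := congrArg (Nat.cast : ℕ → ℚ) (Nat.add_one_mul_choose_eq (2 * n) n)
  rw [Nat.choose_symm_half] at h
  push_cast at h
  simp only [catalanTriangleA, catalanQ, Nat.add_sub_cancel]
  field_simp
  linear_combination -h

theorem catalanTriangle_alternating_row_sums (n : ℕ) (hn : 1 ≤ n) :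
    (∑ k ∈ Finset.Icc 1 n, (-1 : ℚ) ^ k * catalanTriangleB n k) = -catalanQ (n - 1) ∧
      (∑ k ∈ Finset.Icc 1 (n + 1), (-1 : ℚ) ^ k * catalanTriangleA n k) = 0 := by
  constructor
  · obtain ⟨m, rfl⟩ := Nat.exists_eq_add_of_le' hn
    have hsplit : ∀ k ∈ Finset.Icc 1 m, (-1 : ℚ) ^ k * catalanTriangleB (m + 1) k =
        (-1) ^ k * (catalanTriangleA m (k - 1 + 1) + catalanTriangleA m (k + 1)) := by
      intro k hk
      rw [Finset.mem_Icc] at hk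
      rw [catalanTriangleB_succ_eq_add hk.1 hk.2, Nat.sub_add_cancel hk.1]
    rw [Finset.sum_Icc_succ_top (by omega), Finset.sum_congr rfl hsplit,
      Finset.sum_Icc_neg_one_pow_mul_add (fun k => catalanTriangleA m (k + 1)),
      catalanTriangleA_succ_self, catalanTriangleB_self m.succ_ne_zero, catalanTriangleA_one,
      pow_succ, Nat.add_sub_cancel]
    ring
  · have hsplit : ∀ k ∈ Finset.Icc 1 n, (-1 : ℚ) ^ k * catalanTriangleA n k =
        (-1) ^ k * (catalanTriangleB n (k - 1) + catalanTriangleB n k) := by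
      intro k hk
      rw [Finset.mem_Icc] at hk
      rw [catalanTriangleA_eq_add hk.1 hk.2]
    rw [Finset.sum_Icc_succ_top (by omega), Finset.sum_congr rfl hsplit,
      Finset.sum_Icc_neg_one_pow_mul_add, catalanTriangleA_succ_self,
      catalanTriangleB_self (by omega), catalanTriangleB_zero, pow_succ]
    ring
end
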